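/- arXiv:2412.02828 — 14 statements merged into one kernel-verified Lean document; each statement's English description precedes it below -/
import Mathlib

section
/- Let X be a metric space, x ∈ X, and let S ⊆ X be separated by x. Let P be an uncertain point on X with weight w > 0. If the probability sum of P on S is strictly less than 1/2, then Ed(P,y) > Ed(P,x) for every y ∈ S. -/
/-- The (weighted) expected distance from an uncertain point, given by weight `w`,
locations `p j` and probabilities `f j`, to a point `x`. -/
noncomputable def Ed {X : Type*} [MetricSpace X] {m : ℕ} (w : ℝ) (p : Fin m → X)
    (f : Fin m → ℝ) (x : X) : ℝ :=
  w * ∑ j, f j * dist (p j) x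

open Classical in
/-- The probability sum of an uncertain point with locations `p j` and
probabilities `f j` on a set `S`. -/
noncomputable def probSum {X : Type*} {m : ℕ} (p : Fin m → X)
    (f : Fin m → ℝ) (S : Set X) : ℝ :=
  ∑ j, if p j ∈ S then f j else 0

/-- `S` is separated by `x`: `x ∉ S` and every path from outside `S` to a point of `S`
goes through `x`, i.e. `d(p,y) = d(p,x) + d(x,y)` for `y ∈ S` and `p ∉ S`, `p ≠ x`. -/
def SeparatedBy {X : Type*} [MetricSpace X] (S : Set X) (x : X) : Prop :=
  x ∉ S ∧ ∀ y ∈ S, ∀ p : X, p ∉ S → p ≠ x → dist p y = dist p x + dist x y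

/-! Moving from `x` to `y ∈ S` brings every location in `S` closer by at most `d(x,y)` and
moves every location outside `S` away by exactly `d(x,y)`. So the expected distance grows by
at least `d(x,y)·(1 - 2·probSum)`, which is positive when the mass on `S` is below `1/2`. -/

open Classical in
theorem sum_mul_ite_neg {X : Type*} {m : ℕ} (p : Fin m → X) (f : Fin m → ℝ) (S : Set X)
    (D : ℝ) :
    ∑ j, f j * (if p j ∈ S then -D else D) = D * (∑ j, f j - 2 * probSum p f S) := by
  rw [probSum, mul_sub, Finset.mul_sum, Finset.mul_sum, Finset.mul_sum,
    ← Finset.sum_sub_distrib]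
  refine Finset.sum_congr rfl fun j _ => ?_
  split_ifs <;> ring

section

variable {X : Type*} [MetricSpace X] {S : Set X} {x y : X}

theorem SeparatedBy.dist_eq_add_of_notMem (hS : SeparatedBy S x) (hy : y ∈ S) {q : X}
    (hq : q ∉ S) : dist q y = dist q x + dist x y := by
  by_cases hqx : q = x
  · simp [hqx]
  · exact hS.2 y hy q hq hqx

open Classical in
theorem SeparatedBy.dist_add_ite_le (hS : SeparatedBy S x) (hy : y ∈ S) (q : X) :
    dist q x + (if q ∈ S then -dist x y else dist x y) ≤ dist q y := by
  split_ifs with hq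
  · linarith [dist_triangle q y x, dist_comm x y]
  · exact (hS.dist_eq_add_of_notMem hy hq).ge

theorem SeparatedBy.sum_mul_dist_add_le (hS : SeparatedBy S x) (hy : y ∈ S) {m : ℕ}
    (p : Fin m → X) {f : Fin m → ℝ} (hf : ∀ j, 0 ≤ f j) :
    ∑ j, f j * dist (p j) x + dist x y * (∑ j, f j - 2 * probSum p f S) ≤
      ∑ j, f j * dist (p j) y := by
  classical
  rw [← sum_mul_ite_neg, ← Finset.sum_add_distrib]
  refine Finset.sum_le_sum fun j _ => ?_
  rw [← mul_add]
  exact mul_le_mul_of_nonneg_left (hS.dist_add_ite_le hy (p j)) (hf j)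

end

/-- If `S ⊆ X` is separated by `x`, `P` is an uncertain point with weight `w > 0`,
and the probability sum of `P` on `S` is strictly less than `1/2`, then
`Ed(P,y) > Ed(P,x)` for every `y ∈ S`. -/
theorem stmt_0 {X : Type*} [MetricSpace X] (x : X) (S : Set X)
    (hS : SeparatedBy S x) {m : ℕ} (w : ℝ) (hw : 0 < w)
    (p : Fin m → X) (f : Fin m → ℝ) (hf : ∀ j, 0 ≤ f j) (hsum : ∑ j, f j = 1)
    (hprob : probSum p f S < 1 / 2) :
    ∀ y ∈ S, Ed w p f x < Ed w p f y := by
  intro y hy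
  have hxy : 0 < dist x y := dist_pos.mpr fun h => hS.1 (h ▸ hy)
  have hgain : 0 < dist x y * (∑ j, f j - 2 * probSum p f S) := by
    rw [hsum]
    exact mul_pos hxy (by linarith)
  refine mul_lt_mul_of_pos_left ?_ hw
  linarith [hS.sum_mul_dist_add_le hy p hf]
end

section
/- Let X be a metric space, x ∈ X, and let S ⊆ X be separated by x. Let P be an uncertain point on X with weight w > 0. If the probability sum of P on S is strictly greater than 1/2, then Ed(P,z) > Ed(P,x) for every z ∈ X with z ∉ S and z ≠ x. -/
/-- If `S ⊆ X` is separated by `x`, `P` is an uncertain point with weight `w > 0`,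
and the probability sum of `P` on `S` is strictly greater than `1/2`, then
`Ed(P,z) > Ed(P,x)` for every `z ∈ X` with `z ∉ S` and `z ≠ x`. -/
theorem stmt_1 {X : Type*} [MetricSpace X] (x : X) (S : Set X)
    (hS : SeparatedBy S x) {m : ℕ} (w : ℝ) (hw : 0 < w)
    (p : Fin m → X) (f : Fin m → ℝ) (hf : ∀ j, 0 ≤ f j) (hsum : ∑ j, f j = 1)
    (hprob : 1 / 2 < probSum p f S) :
    ∀ z : X, z ∉ S → z ≠ x → Ed w p f x < Ed w p f z := by
    classical
  intro z hzS hzx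
  obtain ⟨hxS, hsep⟩ := hS
  set D := dist x z with hD
  have hDpos : 0 < D := dist_pos.mpr (fun h => hzx h.symm)
  have hterm : ∀ j, f j * dist (p j) x + (if p j ∈ S then f j else -f j) * D
      ≤ f j * dist (p j) z := by
    intro j
    by_cases hj : p j ∈ S
    · simp only [hj, if_true]
      have h := hsep (p j) hj z hzS hzx
      have : dist (p j) z = dist (p j) x + D := by
        rw [dist_comm (p j) z, h, dist_comm z x, dist_comm x (p j), hD]; ring
      rw [this]; exact le_of_eq (by ring)
    · simp only [hj, if_false]
      have htr : dist (p j) x ≤ dist (p j) z + D := by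
        calc dist (p j) x ≤ dist (p j) z + dist z x := dist_triangle _ _ _
        _ = dist (p j) z + D := by rw [dist_comm z x]
      nlinarith [hf j]
  have hsum2 : ∑ j, (if p j ∈ S then f j else -f j) = 2 * probSum p f S - 1 := by
    have : ∀ j, (if p j ∈ S then f j else -f j)
        = 2 * (if p j ∈ S then f j else 0) - f j := by
      intro j; by_cases hj : p j ∈ S <;> simp [hj] <;> ring
    rw [Finset.sum_congr rfl (fun j _ => this j), Finset.sum_sub_distrib, hsum,
      ← Finset.mul_sum]
    rfl
  have hkey : ∑ j, f j * dist (p j) x + (2 * probSum p f S - 1) * D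
      ≤ ∑ j, f j * dist (p j) z := by
    calc ∑ j, f j * dist (p j) x + (2 * probSum p f S - 1) * D
        = ∑ j, (f j * dist (p j) x + (if p j ∈ S then f j else -f j) * D) := by
          rw [Finset.sum_add_distrib, ← Finset.sum_mul, hsum2]
      _ ≤ ∑ j, f j * dist (p j) z := Finset.sum_le_sum (fun j _ => hterm j)
  have hc : 0 < (2 * probSum p f S - 1) * D := by nlinarith
  unfold Ed
  have : ∑ j, f j * dist (p j) x < ∑ j, f j * dist (p j) z := by linarith
  exact mul_lt_mul_of_pos_left this hw
end

section
/- Let X be a metric space, x ∈ X, and let S ⊆ X be separated by x. Let P be an uncertain point on X with weight w ≥ 0. If the probability sum of P on S is at most 1/2, then Ed(P,y) ≥ Ed(P,x) for every y ∈ S. -/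
/-- If `S ⊆ X` is separated by `x`, `P` is an uncertain point with weight `w ≥ 0`,
and the probability sum of `P` on `S` is at most `1/2`, then
`Ed(P,y) ≥ Ed(P,x)` for every `y ∈ S`. -/
theorem stmt_2 {X : Type*} [MetricSpace X] (x : X) (S : Set X)
    (hS : SeparatedBy S x) {m : ℕ} (w : ℝ) (hw : 0 ≤ w)
    (p : Fin m → X) (f : Fin m → ℝ) (hf : ∀ j, 0 ≤ f j) (hsum : ∑ j, f j = 1)
    (hprob : probSum p f S ≤ 1 / 2) :
    ∀ y ∈ S, Ed w p f x ≤ Ed w p f y := by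
  classical
  intro y hy
  unfold Ed
  apply mul_le_mul_of_nonneg_left _ hw
  have key : ∀ j, f j * dist (p j) x +
      (if p j ∈ S then -f j else f j) * dist x y ≤ f j * dist (p j) y := by
    intro j
    by_cases hjS : p j ∈ S
    · simp only [hjS, if_pos]
      have h1 : dist (p j) x ≤ dist (p j) y + dist y x := dist_triangle _ _ _
      have := mul_le_mul_of_nonneg_left h1 (hf j)
      rw [dist_comm y x] at this
      nlinarith [hf j]
    · simp only [hjS, if_neg, not_false_iff]
      by_cases hjx : p j = x
      · subst hjx
        simp [dist_comm]
      · rw [hS.2 y hy (p j) hjS hjx]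
        ring_nf
        exact le_refl _
  calc ∑ j, f j * dist (p j) x
      ≤ ∑ j, f j * dist (p j) x +
        (∑ j, (if p j ∈ S then -f j else f j)) * dist x y := by
        have hco : 0 ≤ ∑ j, (if p j ∈ S then -f j else f j) := by
          have : ∑ j, (if p j ∈ S then -f j else f j)
              = (∑ j, f j) - 2 * probSum p f S := by
            unfold probSum
            rw [Finset.mul_sum, ← Finset.sum_sub_distrib]
            apply Finset.sum_congr rfl
            intro j _
            by_cases h : p j ∈ S <;> simp [h] <;> ring
          rw [this, hsum]
          linarith
        nlinarith [dist_nonneg (x := x) (y := y)]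
    _ = ∑ j, (f j * dist (p j) x + (if p j ∈ S then -f j else f j) * dist x y) := by
        rw [Finset.sum_add_distrib, Finset.sum_mul]
    _ ≤ ∑ j, f j * dist (p j) y := Finset.sum_le_sum fun j _ => key j
end

section
/- Let X be a metric space, x ∈ X, and let S_1,…,S_s be a split decomposition at x. Let P be an uncertain point on X with weight w > 0. If the probability sum of P on S_1 is strictly greater than 1/2, then Ed(P,y) > Ed(P,x) for every y ∈ X with y ∉ S_1 ∪ {x}; in particular, every median of P lies in the hanging subgraph S_1 ∪ {x}. -/
/-- A split decomposition at `x`: pairwise disjoint sets `S 1, …, S s`, each separated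
by `x`, whose union is `X \ {x}` (the split subgraphs of an articulation point `x`;
the sets `S k ∪ {x}` are the hanging subgraphs). -/
def SplitDecomp {X : Type*} [MetricSpace X] {s : ℕ} (S : Fin s → Set X) (x : X) : Prop :=
  (∀ k l, k ≠ l → Disjoint (S k) (S l)) ∧ (∀ k, SeparatedBy (S k) x) ∧
    (⋃ k, S k) = {x}ᶜ

/-- Claim 1 of Lemma 2: if `S 1, …, S s` is a split decomposition at `x`, `P` has weight
`w > 0`, and the probability sum of `P` on one split subgraph `S a` exceeds `1/2`, then
`Ed(P,y) > Ed(P,x)` for every `y ∉ S a ∪ {x}`; in particular every median of `P`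
(a minimizer of `Ed(P,·)`) lies in the hanging subgraph `S a ∪ {x}`. -/
theorem stmt_3 {X : Type*} [MetricSpace X] (x : X) {s : ℕ} (S : Fin s → Set X)
    (hS : SplitDecomp S x) {m : ℕ} (w : ℝ) (hw : 0 < w)
    (p : Fin m → X) (f : Fin m → ℝ) (hf : ∀ j, 0 ≤ f j) (hsum : ∑ j, f j = 1)
    (a : Fin s) (hprob : 1 / 2 < probSum p f (S a)) :
    (∀ y : X, y ∉ S a ∪ {x} → Ed w p f x < Ed w p f y) ∧
      (∀ z : X, (∀ y : X, Ed w p f z ≤ Ed w p f y) → z ∈ S a ∪ {x}) := by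
  classical
  obtain ⟨hdisj, hsep, hcover⟩ := hS
  have key : ∀ y : X, y ∉ S a ∪ {x} → Ed w p f x < Ed w p f y := by
    intro y hy
    have hyx : y ≠ x := fun h => hy (Or.inr (by simp [h]))
    have hySa : y ∉ S a := fun h => hy (Or.inl h)
    have hyU : y ∈ ⋃ k, S k := by rw [hcover]; exact hyx
    obtain ⟨b, hyb⟩ := Set.mem_iUnion.mp hyU
    have hba : b ≠ a := fun h => hySa (h ▸ hyb)
    have hdxy : 0 < dist x y := dist_pos.mpr (Ne.symm hyx)
    have hterm : ∀ j, (2 * (if p j ∈ S a then f j else 0) - f j) * dist x y ≤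
        f j * dist (p j) y - f j * dist (p j) x := by
      intro j
      by_cases hj : p j ∈ S a
      · simp only [hj, if_pos]
        have hpjb : p j ∉ S b := fun h =>
          Set.disjoint_left.mp (hdisj a b (Ne.symm hba)) hj h
        have hpjx : p j ≠ x := fun h => (hsep a).1 (h ▸ hj)
        have hd := (hsep b).2 y hyb (p j) hpjb hpjx
        have hfj := hf j
        nlinarith [hd]
      · rw [if_neg hj]
        have htri : dist (p j) x ≤ dist (p j) y + dist y x := dist_triangle _ _ _
        rw [dist_comm y x] at htri
        have hfj := hf j
        have h2 : f j * (dist (p j) x - dist x y) ≤ f j * dist (p j) y :=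
          mul_le_mul_of_nonneg_left (by linarith) hfj
        nlinarith
    have hsumle : (2 * probSum p f (S a) - 1) * dist x y ≤
        ∑ j, (f j * dist (p j) y - f j * dist (p j) x) := by
      calc (2 * probSum p f (S a) - 1) * dist x y
          = ∑ j, (2 * (if p j ∈ S a then f j else 0) - f j) * dist x y := by
            rw [← Finset.sum_mul]
            congr 1
            rw [Finset.sum_sub_distrib, ← Finset.mul_sum, hsum, probSum]
        _ ≤ _ := Finset.sum_le_sum fun j _ => hterm j
    have hpos : 0 < ∑ j, (f j * dist (p j) y - f j * dist (p j) x) := by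
      have h1 : 0 < (2 * probSum p f (S a) - 1) * dist x y := by nlinarith
      linarith
    rw [Finset.sum_sub_distrib] at hpos
    unfold Ed
    have := mul_lt_mul_of_pos_left (by linarith :
      ∑ j, f j * dist (p j) x < ∑ j, f j * dist (p j) y) hw
    exact this
  refine ⟨key, fun z hz => ?_⟩
  by_contra hzc
  exact absurd (hz x) (not_le.mpr (key z hzc))
end

section
/- Let X be a metric space, x ∈ X, and let S_1,…,S_s be a split decomposition at x. Let P be an uncertain point on X with weight w ≥ 0. If the probability sum of P on S_k is strictly less than 1/2 for every k = 1,…,s, then Ed(P,x) ≤ Ed(P,y) for every y ∈ X, i.e., x is a median of P. -/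
/-- Claim 2 of Lemma 2: if `S 1, …, S s` is a split decomposition at `x`, `P` has weight
`w ≥ 0`, and the probability sum of `P` on every split subgraph `S k` is strictly less
than `1/2`, then `x` is a median of `P`: `Ed(P,x) ≤ Ed(P,y)` for every `y ∈ X`. -/
theorem stmt_4 {X : Type*} [MetricSpace X] (x : X) {s : ℕ} (S : Fin s → Set X)
    (hS : SplitDecomp S x) {m : ℕ} (w : ℝ) (hw : 0 ≤ w)
    (p : Fin m → X) (f : Fin m → ℝ) (hf : ∀ j, 0 ≤ f j) (hsum : ∑ j, f j = 1)
    (hprob : ∀ k, probSum p f (S k) < 1 / 2) :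
    ∀ y : X, Ed w p f x ≤ Ed w p f y := by
  classical
  intro y
  by_cases hyx : y = x
  · subst hyx; exact le_refl _
  obtain ⟨hdisj, hsep, hunion⟩ := hS
  have hy : y ∈ ⋃ k, S k := by rw [hunion]; exact hyx
  obtain ⟨k₀, hk₀⟩ := Set.mem_iUnion.mp hy
  set d := dist x y with hd
  have hd0 : 0 ≤ d := dist_nonneg
  have key : ∀ j, f j * dist (p j) x ≤ f j * dist (p j) y +
      (if p j ∈ S k₀ then f j * d else -(f j * d)) := by
    intro j
    by_cases hj : p j ∈ S k₀
    · simp only [hj, if_true]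
      have h1 : dist (p j) x ≤ dist (p j) y + dist y x := dist_triangle _ _ _
      have h2 : dist y x = d := by rw [hd, dist_comm]
      nlinarith [hf j]
    · simp only [hj, if_false]
      by_cases hpx : p j = x
      · subst hpx
        simp only [dist_self, mul_zero]
        rw [hd]
        linarith
      · have h1 : dist (p j) y = dist (p j) x + d :=
          (hsep k₀).2 y hk₀ (p j) hj hpx
        nlinarith [hf j]
  have hterm : ∀ j, (if p j ∈ S k₀ then f j * d else -(f j * d)) =
      (2 * (if p j ∈ S k₀ then f j else 0) - f j) * d := by
    intro j; by_cases hj : p j ∈ S k₀ <;> simp only [hj, if_true, if_false] <;> ring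
  have hsum2 : ∑ j, (if p j ∈ S k₀ then f j * d else -(f j * d))
      = (2 * probSum p f (S k₀) - 1) * d := by
    simp only [hterm]
    rw [← Finset.sum_mul, Finset.sum_sub_distrib, ← Finset.mul_sum, hsum, probSum]
  have hq : 2 * probSum p f (S k₀) - 1 ≤ 0 := by
    have := hprob k₀; linarith
  have hneg : (2 * probSum p f (S k₀) - 1) * d ≤ 0 :=
    mul_nonpos_of_nonpos_of_nonneg hq hd0
  have hmain : ∑ j, f j * dist (p j) x ≤ ∑ j, f j * dist (p j) y := by
    calc ∑ j, f j * dist (p j) x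
        ≤ ∑ j, (f j * dist (p j) y +
            (if p j ∈ S k₀ then f j * d else -(f j * d))) :=
          Finset.sum_le_sum fun j _ => key j
      _ = ∑ j, f j * dist (p j) y +
            ∑ j, (if p j ∈ S k₀ then f j * d else -(f j * d)) :=
          Finset.sum_add_distrib
      _ ≤ ∑ j, f j * dist (p j) y := by rw [hsum2]; linarith
  exact mul_le_mul_of_nonneg_left hmain hw
end

section
/- Let X be a metric space, x ∈ X, and let S_1,…,S_s be a split decomposition at x. Let P be an uncertain point on X with weight w ≥ 0. If there is an index a such that the probability sum of P on S_a equals exactly 1/2, then Ed(P,x) ≤ Ed(P,y) for every y ∈ X, i.e., x is a median of P. -/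
/-- Claim 3 of Lemma 2: if `S 1, …, S s` is a split decomposition at `x`, `P` has weight
`w ≥ 0`, and the probability sum of `P` on some split subgraph `S a` is exactly `1/2`,
then `x` is a median of `P`: `Ed(P,x) ≤ Ed(P,y)` for every `y ∈ X`. -/
theorem stmt_5 {X : Type*} [MetricSpace X] (x : X) {s : ℕ} (S : Fin s → Set X)
    (hS : SplitDecomp S x) {m : ℕ} (w : ℝ) (hw : 0 ≤ w)
    (p : Fin m → X) (f : Fin m → ℝ) (hf : ∀ j, 0 ≤ f j) (hsum : ∑ j, f j = 1)
    (a : Fin s) (hprob : probSum p f (S a) = 1 / 2) :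
    ∀ y : X, Ed w p f x ≤ Ed w p f y := by
  classical
  obtain ⟨-, hsep, -⟩ := hS
  have hA := hsep a
  intro y
  unfold Ed
  apply mul_le_mul_of_nonneg_left _ hw
  by_cases hyx : y = x
  · subst hyx; exact le_refl _
  unfold probSum at hprob
  by_cases hyA : y ∈ S a
  · -- c j = if p j ∈ S a then -f j else f j, sums to 0
    have hc : ∑ j, (if p j ∈ S a then -f j else f j) = 0 := by
      have : ∀ j : Fin m, (if p j ∈ S a then -f j else f j)
          = f j - 2 * (if p j ∈ S a then f j else 0) := by
        intro j; by_cases h : p j ∈ S a <;> simp [h] <;> ring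
      rw [Finset.sum_congr rfl (fun j _ => this j), Finset.sum_sub_distrib,
        ← Finset.mul_sum, hprob, hsum]
      ring
    have key : ∀ j : Fin m,
        f j * dist (p j) x + (if p j ∈ S a then -f j else f j) * dist x y
          ≤ f j * dist (p j) y := by
      intro j
      by_cases h : p j ∈ S a
      · simp only [h, if_true]
        have ht : dist (p j) x ≤ dist (p j) y + dist y x := dist_triangle _ _ _
        have hfj := hf j
        rw [dist_comm y x] at ht
        nlinarith
      · simp only [h, if_false]
        by_cases hx : p j = x
        · subst hx; simp
        · rw [hA.2 y hyA (p j) h hx, mul_add]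
    calc ∑ j, f j * dist (p j) x
        = ∑ j, (f j * dist (p j) x + (if p j ∈ S a then -f j else f j) * dist x y) := by
          rw [Finset.sum_add_distrib, ← Finset.sum_mul, hc]; ring
      _ ≤ ∑ j, f j * dist (p j) y := Finset.sum_le_sum (fun j _ => key j)
  · -- y outside S a and y ≠ x
    have hc : ∑ j, (if p j ∈ S a then f j else -f j) = 0 := by
      have : ∀ j : Fin m, (if p j ∈ S a then f j else -f j)
          = 2 * (if p j ∈ S a then f j else 0) - f j := by
        intro j; by_cases h : p j ∈ S a <;> simp [h] <;> ring
      rw [Finset.sum_congr rfl (fun j _ => this j), Finset.sum_sub_distrib,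
        ← Finset.mul_sum, hprob, hsum]
      ring
    have key : ∀ j : Fin m,
        f j * dist (p j) x + (if p j ∈ S a then f j else -f j) * dist x y
          ≤ f j * dist (p j) y := by
      intro j
      by_cases h : p j ∈ S a
      · simp only [h, if_true]
        have := hA.2 (p j) h y hyA hyx
        rw [dist_comm (p j) y, this, dist_comm y x, dist_comm x (p j)]
        ring_nf
        exact le_refl _
      · simp only [h, if_false]
        have ht : dist (p j) x ≤ dist (p j) y + dist y x := dist_triangle _ _ _
        have hfj := hf j
        rw [dist_comm y x] at ht
        nlinarith
    calc ∑ j, f j * dist (p j) x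
        = ∑ j, (f j * dist (p j) x + (if p j ∈ S a then f j else -f j) * dist x y) := by
          rw [Finset.sum_add_distrib, ← Finset.sum_mul, hc]; ring
      _ ≤ ∑ j, f j * dist (p j) y := Finset.sum_le_sum (fun j _ => key j)
end

section
/- Let X be a metric space, x ∈ X, and let S ⊆ X be separated by x. Let P_1,…,P_n (n ≥ 1) be uncertain points on X with weights w_i ≥ 0. If some P_r is dominant at x and the probability sum of P_r on S is at most 1/2, then φ(y) ≥ φ(x) for every y ∈ S. -/
/-- The objective value `φ(x) = max_{1 ≤ i ≤ n} Ed(P i, x)` for `n ≥ 1` uncertain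
points, where `P i` has weight `w i`, locations `P i j` and probabilities `f i j`. -/
noncomputable def obj {X : Type*} [MetricSpace X] {n m : ℕ} (hn : 0 < n)
    (w : Fin n → ℝ) (P : Fin n → Fin m → X) (f : Fin n → Fin m → ℝ) (x : X) : ℝ :=
  Finset.univ.sup' (Finset.univ_nonempty_iff.mpr ⟨⟨0, hn⟩⟩)
    fun i => Ed (w i) (P i) (f i) x

/-- If `S` is separated by `x`, `P r` is dominant at `x` (i.e. `Ed(P r, x) = φ(x)`),
and the probability sum of `P r` on `S` is at most `1/2`, then `φ(y) ≥ φ(x)` for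
every `y ∈ S`. -/
theorem stmt_6 {X : Type*} [MetricSpace X] (x : X) (S : Set X) (hS : SeparatedBy S x)
    {n m : ℕ} (hn : 0 < n) (w : Fin n → ℝ) (hw : ∀ i, 0 ≤ w i)
    (P : Fin n → Fin m → X) (f : Fin n → Fin m → ℝ)
    (hf : ∀ i j, 0 ≤ f i j) (hsum : ∀ i, ∑ j, f i j = 1)
    (r : Fin n) (hdom : Ed (w r) (P r) (f r) x = obj hn w P f x)
    (hprob : probSum (P r) (f r) S ≤ 1 / 2) :
    ∀ y ∈ S, obj hn w P f x ≤ obj hn w P f y := by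
  intro y hy
  classical
  have key : Ed (w r) (P r) (f r) x ≤ Ed (w r) (P r) (f r) y := by
    unfold Ed
    apply mul_le_mul_of_nonneg_left _ (hw r)
    have h1 : ∀ j, f r j * dist (P r j) x
        + f r j * (dist x y - (if P r j ∈ S then 2 * dist x y else 0))
        ≤ f r j * dist (P r j) y := by
      intro j
      by_cases hj : P r j ∈ S
      · have ht : dist (P r j) x - dist x y ≤ dist (P r j) y := by
          have := dist_triangle (P r j) y x
          rw [dist_comm y x] at this; linarith
        simp only [hj, if_pos]
        nlinarith [hf r j]
      · have heq : dist (P r j) y = dist (P r j) x + dist x y := by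
          by_cases hx : P r j = x
          · subst hx; simp
          · exact hS.2 y hy _ hj hx
        simp only [hj, if_neg, not_false_iff]
        nlinarith [hf r j]
    have h2 : 0 ≤ ∑ j, f r j * (dist x y - (if P r j ∈ S then 2 * dist x y else 0)) := by
      have he : ∑ j, f r j * (dist x y - (if P r j ∈ S then 2 * dist x y else 0))
          = dist x y * (∑ j, f r j) - 2 * dist x y * probSum (P r) (f r) S := by
        rw [probSum, Finset.mul_sum, Finset.mul_sum, ← Finset.sum_sub_distrib]
        apply Finset.sum_congr rfl
        intro j _
        by_cases hj : P r j ∈ S <;> simp [hj] <;> ring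
      rw [he, hsum r]
      nlinarith [dist_nonneg (x := x) (y := y)]
    calc ∑ j, f r j * dist (P r j) x
        ≤ ∑ j, (f r j * dist (P r j) x
            + f r j * (dist x y - (if P r j ∈ S then 2 * dist x y else 0))) := by
          rw [Finset.sum_add_distrib]; linarith
      _ ≤ ∑ j, f r j * dist (P r j) y := Finset.sum_le_sum fun j _ => h1 j
  calc obj hn w P f x = Ed (w r) (P r) (f r) x := hdom.symm
    _ ≤ Ed (w r) (P r) (f r) y := key
    _ ≤ obj hn w P f y := by
      unfold obj
      exact Finset.le_sup' (fun i => Ed (w i) (P i) (f i) y) (Finset.mem_univ r)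
end

section
/- Let X be a metric space, x ∈ X, and let S_1,…,S_s be a split decomposition at x. Let P_1,…,P_n (n ≥ 1) be uncertain points on X with weights w_i ≥ 0. If some P_r is dominant at x and the probability sum of P_r on S_k is at most 1/2 for every k = 1,…,s (i.e., x is a median of P_r), then φ(x) ≤ φ(y) for every y ∈ X, i.e., x is a center. -/
/-- Claim 1 of Corollary 1: if `S 1, …, S s` is a split decomposition at `x`, some `P r`
is dominant at `x`, and the probability sum of `P r` on every split subgraph `S k` is at
most `1/2` (i.e. `x` is a median of `P r`), then `x` is a center: `φ(x) ≤ φ(y)` for all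
`y ∈ X`. -/
theorem stmt_7 {X : Type*} [MetricSpace X] (x : X) {s : ℕ} (S : Fin s → Set X)
    (hS : SplitDecomp S x)
    {n m : ℕ} (hn : 0 < n) (w : Fin n → ℝ) (hw : ∀ i, 0 ≤ w i)
    (P : Fin n → Fin m → X) (f : Fin n → Fin m → ℝ)
    (hf : ∀ i j, 0 ≤ f i j) (hsum : ∀ i, ∑ j, f i j = 1)
    (r : Fin n) (hdom : Ed (w r) (P r) (f r) x = obj hn w P f x)
    (hprob : ∀ k, probSum (P r) (f r) (S k) ≤ 1 / 2) :
    ∀ y : X, obj hn w P f x ≤ obj hn w P f y := by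
  classical
  intro y
  by_cases hyx : y = x
  · subst hyx; exact le_refl _
  have hy : y ∈ ⋃ k, S k := by rw [hS.2.2]; exact hyx
  obtain ⟨k, hk⟩ := Set.mem_iUnion.mp hy
  have key : Ed (w r) (P r) (f r) x ≤ Ed (w r) (P r) (f r) y := by
    unfold Ed
    apply mul_le_mul_of_nonneg_left _ (hw r)
    have hsep := hS.2.1 k
    have hpt : ∀ j : Fin m, f r j * dist (P r j) x +
        (f r j - 2 * (if P r j ∈ S k then f r j else 0)) * dist x y
        ≤ f r j * dist (P r j) y := by
      intro j
      by_cases hj : P r j ∈ S k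
      · simp only [hj, if_true]
        have h1 : dist (P r j) x ≤ dist (P r j) y + dist y x := dist_triangle _ _ _
        have h2 := hf r j
        have h3 : dist y x = dist x y := dist_comm y x
        nlinarith
      · simp only [hj, if_false]
        by_cases hjx : P r j = x
        · rw [hjx]; simp
        · have := hsep.2 y hk (P r j) hj hjx
          rw [this]; ring_nf; linarith
    have hstep : ∑ j, f r j * dist (P r j) x ≤
        ∑ j, (f r j * dist (P r j) x +
          (f r j - 2 * (if P r j ∈ S k then f r j else 0)) * dist x y) := by
      have hfac : ∑ j, (f r j - 2 * (if P r j ∈ S k then f r j else 0)) * dist x y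
          = (1 - 2 * probSum (P r) (f r) (S k)) * dist x y := by
        rw [← Finset.sum_mul]
        congr 1
        rw [Finset.sum_sub_distrib, ← Finset.mul_sum, hsum r]
        rfl
      have hnn : 0 ≤ (1 - 2 * probSum (P r) (f r) (S k)) * dist x y := by
        have := hprob k
        have := dist_nonneg (x := x) (y := y)
        nlinarith
      rw [Finset.sum_add_distrib, hfac]
      linarith
    exact hstep.trans (Finset.sum_le_sum fun j _ => hpt j)
  rw [← hdom]
  exact key.trans (Finset.le_sup' (fun i => Ed (w i) (P i) (f i) y) (Finset.mem_univ r))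
end

section
/- Let X be a metric space, x ∈ X, and let S_1,…,S_s be a split decomposition at x. Let P_1,…,P_n (n ≥ 1) be uncertain points on X. Suppose there are indices r ≠ t such that P_r and P_t are both dominant at x, have weights w_r > 0 and w_t > 0, and there are indices a ≠ b with the probability sum of P_r on S_a strictly greater than 1/2 and the probability sum of P_t on S_b strictly greater than 1/2 (so their medians lie in different hanging subgraphs). Then φ(y) > φ(x) for every y ∈ X with y ≠ x; in particular x is the unique center. -/
/-- Claim 2 of Corollary 1: if `S 1, …, S s` is a split decomposition at `x`, and two
distinct uncertain points `P r`, `P t` (with positive weights) are both dominant at `x`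
and have their probability sums exceeding `1/2` on two distinct split subgraphs `S a`
and `S b` (so their medians lie in different hanging subgraphs), then `φ(y) > φ(x)` for
every `y ≠ x`; in particular `x` is the unique center. -/
theorem stmt_8 {X : Type*} [MetricSpace X] (x : X) {s : ℕ} (S : Fin s → Set X)
    (hS : SplitDecomp S x)
    {n m : ℕ} (hn : 0 < n) (w : Fin n → ℝ)
    (P : Fin n → Fin m → X) (f : Fin n → Fin m → ℝ)
    (hf : ∀ i j, 0 ≤ f i j) (hsum : ∀ i, ∑ j, f i j = 1)
    (r t : Fin n) (hrt : r ≠ t) (hwr : 0 < w r) (hwt : 0 < w t)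
    (hdomr : Ed (w r) (P r) (f r) x = obj hn w P f x)
    (hdomt : Ed (w t) (P t) (f t) x = obj hn w P f x)
    (a b : Fin s) (hab : a ≠ b)
    (hpr : 1 / 2 < probSum (P r) (f r) (S a))
    (hpt : 1 / 2 < probSum (P t) (f t) (S b)) :
    (∀ y : X, y ≠ x → obj hn w P f x < obj hn w P f y) ∧
      (∀ z : X, (∀ y : X, obj hn w P f z ≤ obj hn w P f y) → z = x) := by
  classical
  -- key lemma: if y ∉ Sa, y ≠ x, probSum > 1/2, then Ed at x < Ed at y
  have key : ∀ (Sa : Set X), SeparatedBy Sa x → ∀ (y : X), y ∉ Sa → y ≠ x →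
      ∀ (W : ℝ), 0 < W → ∀ (p : Fin m → X) (g : Fin m → ℝ), (∀ j, 0 ≤ g j) →
      (∑ j, g j = 1) → 1 / 2 < probSum p g Sa →
      Ed W p g x < Ed W p g y := by
    intro Sa hsep y hy hyx W hW p g hg hgsum hF
    have hd : 0 < dist x y := by
      rw [dist_pos]; exact fun h => hyx h.symm
    have hterm : ∀ j, g j * dist (p j) x +
        (if p j ∈ Sa then g j * dist x y else -(g j * dist x y)) ≤ g j * dist (p j) y := by
      intro j
      by_cases hj : p j ∈ Sa
      · simp only [hj, if_true]
        have := hsep.2 (p j) hj y hy hyx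
        rw [dist_comm (p j) y, this, dist_comm y x, dist_comm x (p j)]
        exact le_of_eq (by ring)
      · simp only [hj, if_false]
        have htri : dist (p j) x - dist x y ≤ dist (p j) y := by
          have := dist_triangle (p j) y x
          rw [dist_comm y x] at this; linarith
        nlinarith [hg j, mul_le_mul_of_nonneg_left htri (hg j)]
    have hsumle : ∑ j, (g j * dist (p j) x +
        (if p j ∈ Sa then g j * dist x y else -(g j * dist x y)))
        ≤ ∑ j, g j * dist (p j) y := Finset.sum_le_sum fun j _ => hterm j
    have hsplit : ∑ j, (g j * dist (p j) x +
        (if p j ∈ Sa then g j * dist x y else -(g j * dist x y)))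
        = ∑ j, g j * dist (p j) x + (2 * probSum p g Sa - 1) * dist x y := by
      rw [Finset.sum_add_distrib]
      congr 1
      have : ∀ j : Fin m, (if p j ∈ Sa then g j * dist x y else -(g j * dist x y))
          = (2 * (if p j ∈ Sa then g j else 0) - g j) * dist x y := by
        intro j; by_cases hj : p j ∈ Sa
        · rw [if_pos hj, if_pos hj]; ring
        · rw [if_neg hj, if_neg hj]; ring
      simp only [this]
      rw [← Finset.sum_mul]
      congr 1
      rw [Finset.sum_sub_distrib, ← Finset.mul_sum, hgsum, probSum]
    have hEd : ∑ j, g j * dist (p j) x + (2 * probSum p g Sa - 1) * dist x y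
        ≤ ∑ j, g j * dist (p j) y := by rw [← hsplit]; exact hsumle
    have hpos : 0 < (2 * probSum p g Sa - 1) * dist x y := by
      apply mul_pos; linarith; exact hd
    unfold Ed
    have : ∑ j, g j * dist (p j) x < ∑ j, g j * dist (p j) y := by linarith
    exact mul_lt_mul_of_pos_left this hW
  have main : ∀ y : X, y ≠ x → obj hn w P f x < obj hn w P f y := by
    intro y hyx
    by_cases hyA : y ∈ S a
    · -- y ∈ S a, so y ∉ S b
      have hyB : y ∉ S b := fun h => (hS.1 a b hab).ne_of_mem hyA h rfl
      have h1 := key (S b) (hS.2.1 b) y hyB hyx (w t) hwt (P t) (f t) (hf t) (hsum t) hpt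
      calc obj hn w P f x = Ed (w t) (P t) (f t) x := hdomt.symm
        _ < Ed (w t) (P t) (f t) y := h1
        _ ≤ obj hn w P f y := by unfold obj; exact Finset.le_sup' (fun i => Ed (w i) (P i) (f i) y) (Finset.mem_univ t)
    · have h1 := key (S a) (hS.2.1 a) y hyA hyx (w r) hwr (P r) (f r) (hf r) (hsum r) hpr
      calc obj hn w P f x = Ed (w r) (P r) (f r) x := hdomr.symm
        _ < Ed (w r) (P r) (f r) y := h1
        _ ≤ obj hn w P f y := by unfold obj; exact Finset.le_sup' (fun i => Ed (w i) (P i) (f i) y) (Finset.mem_univ r)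
  refine ⟨main, fun z hz => ?_⟩
  by_contra hzx
  exact absurd (hz x) (not_le.mpr (main z hzx))
end

section
/- Let X be a metric space, x ∈ X, and let S_1,…,S_s be a split decomposition at x. Let P_1,…,P_n (n ≥ 1) be uncertain points on X. Suppose some P_r is dominant at x, has weight w_r > 0, and its probability sum on S_a is strictly greater than 1/2 for some index a. Then φ(y) > φ(x) for every y ∈ X with y ∉ S_a ∪ {x}; in particular every center lies in the hanging subgraph S_a ∪ {x}. -/
/-- Claim 3 of Corollary 1: if `S 1, …, S s` is a split decomposition at `x`, some `P r`
with weight `w r > 0` is dominant at `x`, and the probability sum of `P r` on some split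
subgraph `S a` exceeds `1/2`, then `φ(y) > φ(x)` for every `y ∉ S a ∪ {x}`; in
particular every center lies in the hanging subgraph `S a ∪ {x}`. -/
theorem stmt_9 {X : Type*} [MetricSpace X] (x : X) {s : ℕ} (S : Fin s → Set X)
    (hS : SplitDecomp S x)
    {n m : ℕ} (hn : 0 < n) (w : Fin n → ℝ)
    (P : Fin n → Fin m → X) (f : Fin n → Fin m → ℝ)
    (hf : ∀ i j, 0 ≤ f i j) (hsum : ∀ i, ∑ j, f i j = 1)
    (r : Fin n) (hwr : 0 < w r)
    (hdom : Ed (w r) (P r) (f r) x = obj hn w P f x)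
    (a : Fin s) (hprob : 1 / 2 < probSum (P r) (f r) (S a)) :
    (∀ y : X, y ∉ S a ∪ {x} → obj hn w P f x < obj hn w P f y) ∧
      (∀ z : X, (∀ y : X, obj hn w P f z ≤ obj hn w P f y) → z ∈ S a ∪ {x}) := by
  classical
  obtain ⟨hdisj, hsep, hcover⟩ := hS
  have key : ∀ y : X, y ∉ S a ∪ {x} → obj hn w P f x < obj hn w P f y := by
    intro y hy
    have hyS : y ∉ S a := fun h => hy (Or.inl h)
    have hyx : y ≠ x := fun h => hy (Or.inr h)
    have hd : 0 < dist x y := dist_pos.mpr (Ne.symm hyx)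
    have hterm : ∀ j, f r j * dist (P r j) x
        + (if P r j ∈ S a then f r j else -f r j) * dist x y ≤ f r j * dist (P r j) y := by
      intro j
      by_cases h : P r j ∈ S a
      · simp only [h, if_pos]
        have hsep' := (hsep a).2 (P r j) h y hyS hyx
        rw [dist_comm (P r j) y, hsep', dist_comm y x, dist_comm x (P r j)]
        ring_nf
        exact le_refl _
      · simp only [h, if_neg, not_false_iff]
        have htri : dist (P r j) x ≤ dist (P r j) y + dist x y := by
          rw [dist_comm x y]; exact dist_triangle _ _ _
        nlinarith [hf r j]
    have hsumterm : ∑ j, (if P r j ∈ S a then f r j else -f r j)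
        = 2 * probSum (P r) (f r) (S a) - 1 := by
      rw [probSum, ← hsum r, Finset.mul_sum, ← Finset.sum_sub_distrib]
      apply Finset.sum_congr rfl
      intro j _
      by_cases h : P r j ∈ S a <;> simp [h] <;> ring
    have hmain : ∑ j, f r j * dist (P r j) x < ∑ j, f r j * dist (P r j) y := by
      have h1 : ∑ j, (f r j * dist (P r j) x
          + (if P r j ∈ S a then f r j else -f r j) * dist x y)
          ≤ ∑ j, f r j * dist (P r j) y := Finset.sum_le_sum fun j _ => hterm j
      rw [Finset.sum_add_distrib, ← Finset.sum_mul, hsumterm] at h1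
      nlinarith
    have hEd : Ed (w r) (P r) (f r) x < Ed (w r) (P r) (f r) y := by
      unfold Ed
      exact mul_lt_mul_of_pos_left hmain hwr
    calc obj hn w P f x = Ed (w r) (P r) (f r) x := hdom.symm
      _ < Ed (w r) (P r) (f r) y := hEd
      _ ≤ obj hn w P f y := Finset.le_sup' (fun i => Ed (w i) (P i) (f i) y) (Finset.mem_univ r)
  refine ⟨key, fun z hz => ?_⟩
  by_contra hzout
  exact absurd (hz x) (not_le.mpr (key z hzout))
end

section
/- Let X be a metric space with a block structure: points v_1,…,v_s ∈ X and pairwise disjoint sets S_1,…,S_s ⊆ X such that v_r ∉ S_k for all r,k and each S_k is separated by v_k. Let P_1,…,P_n (n ≥ 1) be uncertain points on X, all with weights w_i > 0, and let 𝒫_k = {i : probability sum of P_i on S_k > 1/2}. Suppose there exist an index t and j ∈ 𝒫_t such that Ed(P_j,v_t) ≥ Ed(P_i,v_r) for every index r and every i ∈ 𝒫_r (i.e., γ := Ed(P_j,v_t) is the maximum of the values τ_r = max_{i∈𝒫_r} Ed(P_i,v_r)). If k is an index such that Ed(P_i,v_k) < γ for every i ∈ 𝒫_k (i.e., τ_k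 < γ), then φ(y) ≥ φ(v_k) for every y ∈ S_k; hence no point in the interior S_k of the hanging subgraph has strictly smaller objective value than the hinge v_k. -/
open Classical in
lemma Ed_le_case1 {X : Type*} [MetricSpace X] {m : ℕ} {S : Set X} {x : X}
    (hsep : SeparatedBy S x) {y : X} (hy : y ∈ S) {w : ℝ} (hw : 0 ≤ w)
    (p : Fin m → X) (f : Fin m → ℝ) (hf : ∀ j, 0 ≤ f j) (hsum : ∑ j, f j = 1)
    (hps : probSum p f S ≤ 1 / 2) : Ed w p f x ≤ Ed w p f y := by
  unfold Ed
  apply mul_le_mul_of_nonneg_left _ hw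
  set D := dist x y with hD
  have hD0 : 0 ≤ D := dist_nonneg
  have h1 : ∀ jj : Fin m, f jj * dist (p jj) x ≤
      f jj * dist (p jj) y + ((if p jj ∈ S then 2 * f jj * D else 0) - f jj * D) := by
    intro jj
    by_cases hmem : p jj ∈ S
    · simp only [hmem, if_pos]
      have htri : dist (p jj) x ≤ dist (p jj) y + D := by
        have := dist_triangle (p jj) y x
        rw [dist_comm y x] at this
        linarith
      nlinarith [hf jj]
    · simp only [hmem, if_neg, not_false_iff]
      by_cases hx : p jj = x
      · subst hx
        have : dist (p jj) y = D := hD.symm ▸ rfl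
        simp [this]
      · have := hsep.2 y hy (p jj) hmem hx
        rw [this]
        ring_nf
        nlinarith [hf jj]
  calc ∑ jj, f jj * dist (p jj) x
      ≤ ∑ jj, (f jj * dist (p jj) y + ((if p jj ∈ S then 2 * f jj * D else 0) - f jj * D)) :=
        Finset.sum_le_sum fun jj _ => h1 jj
    _ = (∑ jj, f jj * dist (p jj) y) + 2 * D * probSum p f S - D * ∑ jj, f jj := by
        rw [probSum, Finset.mul_sum, Finset.mul_sum, ← Finset.sum_add_distrib,
          ← Finset.sum_sub_distrib]
        apply Finset.sum_congr rfl
        intro jj _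
        split_ifs <;> ring
    _ ≤ ∑ jj, f jj * dist (p jj) y := by
        rw [hsum]
        nlinarith

open Classical in
lemma Ed_le_case2 {X : Type*} [MetricSpace X] {m : ℕ} {S : Set X} {x : X}
    (hsep : SeparatedBy S x) {y : X} (hy : y ∉ S) (hyx : y ≠ x) {w : ℝ} (hw : 0 ≤ w)
    (p : Fin m → X) (f : Fin m → ℝ) (hf : ∀ j, 0 ≤ f j) (hsum : ∑ j, f j = 1)
    (hps : 1 / 2 ≤ probSum p f S) : Ed w p f x ≤ Ed w p f y := by
  unfold Ed
  apply mul_le_mul_of_nonneg_left _ hw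
  set D := dist x y with hD
  have hD0 : 0 ≤ D := dist_nonneg
  have h1 : ∀ jj : Fin m, f jj * dist (p jj) x ≤
      f jj * dist (p jj) y + (f jj * D - (if p jj ∈ S then 2 * f jj * D else 0)) := by
    intro jj
    by_cases hmem : p jj ∈ S
    · simp only [hmem, if_pos]
      have heq : dist y (p jj) = dist y x + dist x (p jj) :=
        hsep.2 (p jj) hmem y hy hyx
      rw [dist_comm (p jj) y, heq, dist_comm y x, dist_comm x (p jj)]
      nlinarith [hf jj]
    · simp only [hmem, if_neg, not_false_iff]
      have htri : dist (p jj) x ≤ dist (p jj) y + dist y x := dist_triangle _ _ _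
      rw [dist_comm y x] at htri
      nlinarith [hf jj]
  calc ∑ jj, f jj * dist (p jj) x
      ≤ ∑ jj, (f jj * dist (p jj) y + (f jj * D - (if p jj ∈ S then 2 * f jj * D else 0))) :=
        Finset.sum_le_sum fun jj _ => h1 jj
    _ = (∑ jj, f jj * dist (p jj) y) + D * (∑ jj, f jj) - 2 * D * probSum p f S := by
        rw [probSum, Finset.mul_sum, Finset.mul_sum, ← Finset.sum_add_distrib,
          ← Finset.sum_sub_distrib]
        apply Finset.sum_congr rfl
        intro jj _
        split_ifs <;> ring
    _ ≤ ∑ jj, f jj * dist (p jj) y := by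
        rw [hsum]
        nlinarith

/-- First part of Observation 1. Block structure: hinges `v 1, …, v s`, pairwise
disjoint sets `S 1, …, S s` (the interiors of the hanging subgraphs) with `v r ∉ S k`
for all `r, k`, each `S k` separated by `v k`. For each `k`, `𝒫 k` consists of the
indices `i` with the probability sum of `P i` on `S k` exceeding `1/2`, and
`τ k = max_{i ∈ 𝒫 k} Ed(P i, v k)`. If `γ = Ed(P j, v t)` with `j ∈ 𝒫 t` is the maximum
of all these values, and `τ k < γ` (i.e. `Ed(P i, v k) < γ` for every `i ∈ 𝒫 k`), then
`φ(y) ≥ φ(v k)` for every `y ∈ S k`: no point in the interior of the hanging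
subgraph `S k` has strictly smaller objective value than the hinge `v k`. -/
theorem stmt_10 {X : Type*} [MetricSpace X] {s : ℕ} (v : Fin s → X) (S : Fin s → Set X)
    (hdisj : ∀ k l, k ≠ l → Disjoint (S k) (S l))
    (hv : ∀ r k, v r ∉ S k)
    (hsep : ∀ k, SeparatedBy (S k) (v k))
    {n m : ℕ} (hn : 0 < n) (w : Fin n → ℝ) (hw : ∀ i, 0 < w i)
    (P : Fin n → Fin m → X) (f : Fin n → Fin m → ℝ)
    (hf : ∀ i j, 0 ≤ f i j) (hsum : ∀ i, ∑ j, f i j = 1)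
    (t : Fin s) (j : Fin n) (hjt : 1 / 2 < probSum (P j) (f j) (S t))
    (hmax : ∀ r : Fin s, ∀ i : Fin n, 1 / 2 < probSum (P i) (f i) (S r) →
      Ed (w i) (P i) (f i) (v r) ≤ Ed (w j) (P j) (f j) (v t))
    (k : Fin s)
    (hk : ∀ i : Fin n, 1 / 2 < probSum (P i) (f i) (S k) →
      Ed (w i) (P i) (f i) (v k) < Ed (w j) (P j) (f j) (v t)) :
    ∀ y ∈ S k, obj hn w P f (v k) ≤ obj hn w P f y := by
  intro y hy
  have hkt : k ≠ t := by
    intro h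
    subst h
    exact lt_irrefl _ (hk j hjt)
  have hyt : y ∉ S t := fun h => (hdisj k t hkt).le_bot ⟨hy, h⟩
  have hyvt : y ≠ v t := fun h => hv t k (h ▸ hy)
  have hjy : Ed (w j) (P j) (f j) (v t) ≤ Ed (w j) (P j) (f j) y :=
    Ed_le_case2 (hsep t) hyt hyvt (le_of_lt (hw j)) (P j) (f j) (hf j) (hsum j)
      (le_of_lt hjt)
  unfold obj
  apply Finset.sup'_le
  intro i _
  by_cases hi : 1 / 2 < probSum (P i) (f i) (S k)
  · calc Ed (w i) (P i) (f i) (v k)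
        ≤ Ed (w j) (P j) (f j) (v t) := le_of_lt (hk i hi)
      _ ≤ Ed (w j) (P j) (f j) y := hjy
      _ ≤ _ := Finset.le_sup' (fun i => Ed (w i) (P i) (f i) y) (Finset.mem_univ j)
  · calc Ed (w i) (P i) (f i) (v k)
        ≤ Ed (w i) (P i) (f i) y :=
          Ed_le_case1 (hsep k) hy (le_of_lt (hw i)) (P i) (f i) (hf i) (hsum i)
            (le_of_not_gt hi)
      _ ≤ _ := Finset.le_sup' (fun i => Ed (w i) (P i) (f i) y) (Finset.mem_univ i)
end

section
/- Let X be a metric space with a block structure: points v_1,…,v_s ∈ X and pairwise disjoint sets S_1,…,S_s ⊆ X such that v_r ∉ S_k for all r,k and each S_k is separated by v_k. Let P_1,…,P_n (n ≥ 1) be uncertain points on X, all with weights w_i > 0, and let 𝒫_k = {i : probability sum of P_i on S_k > 1/2}. Suppose there exist indices r ≠ t, j_r ∈ 𝒫_r and j_t ∈ 𝒫_t such that Ed(P_{j_r},v_r) = Ed(P_{j_t},v_t) = γ, where γ ≥ Ed(P_i,v_q) for every index q and every i ∈ 𝒫_q (i.e., two distinct hanging subgraphs attain the maximum value γ of the τ's).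 Then for every index k and every y ∈ S_k, φ(y) ≥ φ(v_k); hence no point in the interior of any hanging subgraph has strictly smaller objective value than its hinge, i.e., the center can be taken on the block. -/
lemma key_Ed_le {X : Type*} [MetricSpace X] {m : ℕ} (w : ℝ) (hw : 0 ≤ w)
    (p : Fin m → X) (f : Fin m → ℝ) (hf : ∀ j, 0 ≤ f j) (v y : X) (σ : Fin m → ℝ)
    (hb : ∀ j, σ j * dist v y ≤ dist (p j) y - dist (p j) v)
    (hσ : 0 ≤ ∑ j, f j * σ j) :
    Ed w p f v ≤ Ed w p f y := by
  unfold Ed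
  apply mul_le_mul_of_nonneg_left _ hw
  have h2 : (∑ j, f j * σ j) * dist v y ≤
      ∑ j, (f j * dist (p j) y - f j * dist (p j) v) := by
    rw [Finset.sum_mul]
    apply Finset.sum_le_sum
    intro j _
    have := mul_le_mul_of_nonneg_left (hb j) (hf j)
    nlinarith
  have h3 : 0 ≤ (∑ j, f j * σ j) * dist v y := mul_nonneg hσ dist_nonneg
  rw [Finset.sum_sub_distrib] at h2
  linarith

open Classical in
lemma lemA {X : Type*} [MetricSpace X] {m : ℕ} (w : ℝ) (hw : 0 ≤ w)
    (p : Fin m → X) (f : Fin m → ℝ) (hf : ∀ j, 0 ≤ f j) (hsum : ∑ j, f j = 1)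
    (S : Set X) (v y : X) (hsep : SeparatedBy S v) (hy : y ∈ S)
    (hF : probSum p f S ≤ 1 / 2) :
    Ed w p f v ≤ Ed w p f y := by
  apply key_Ed_le w hw p f hf v y (fun j => if p j ∈ S then -1 else 1)
  · intro j
    by_cases h : p j ∈ S
    · simp only [h, if_true]
      have h1 := dist_triangle (p j) y v
      have h2 : dist y v = dist v y := dist_comm y v
      linarith
    · simp only [h, if_false, one_mul]
      by_cases hpv : p j = v
      · subst hpv; simp
      · have := hsep.2 y hy (p j) h hpv
        linarith
  · have heq : ∑ j, f j * (if p j ∈ S then (-1 : ℝ) else 1)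
        = (∑ j, f j) - 2 * probSum p f S := by
      unfold probSum
      rw [Finset.mul_sum, ← Finset.sum_sub_distrib]
      apply Finset.sum_congr rfl
      intro j _
      split <;> ring
    rw [heq, hsum]
    linarith

open Classical in
lemma lemB {X : Type*} [MetricSpace X] {m : ℕ} (w : ℝ) (hw : 0 ≤ w)
    (p : Fin m → X) (f : Fin m → ℝ) (hf : ∀ j, 0 ≤ f j) (hsum : ∑ j, f j = 1)
    (S : Set X) (v y : X) (hsep : SeparatedBy S v) (hy : y ∉ S) (hyv : y ≠ v)
    (hF : 1 / 2 ≤ probSum p f S) :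
    Ed w p f v ≤ Ed w p f y := by
  apply key_Ed_le w hw p f hf v y (fun j => if p j ∈ S then 1 else -1)
  · intro j
    by_cases h : p j ∈ S
    · simp only [h, if_true, one_mul]
      have := hsep.2 (p j) h y hy hyv
      have h2 : dist y (p j) = dist (p j) y := dist_comm y (p j)
      have h3 : dist y v = dist v y := dist_comm y v
      have h4 : dist v (p j) = dist (p j) v := dist_comm v (p j)
      linarith
    · simp only [h, if_false]
      have h1 := dist_triangle (p j) y v
      have h2 : dist y v = dist v y := dist_comm y v
      linarith
  · have heq : ∑ j, f j * (if p j ∈ S then (1 : ℝ) else -1)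
        = 2 * probSum p f S - (∑ j, f j) := by
      unfold probSum
      rw [Finset.mul_sum, ← Finset.sum_sub_distrib]
      apply Finset.sum_congr rfl
      intro j _
      split <;> ring
    rw [heq, hsum]
    linarith

/-- Second part of Observation 1. Block structure: hinges `v 1, …, v s`, pairwise
disjoint sets `S 1, …, S s` with `v r ∉ S k` for all `r, k`, each `S k` separated by
`v k`; `𝒫 k` consists of the indices `i` with the probability sum of `P i` on `S k`
exceeding `1/2`. If two distinct hanging subgraphs `S r`, `S t` attain the maximum
value `γ` (i.e. `Ed(P jr, v r) = Ed(P jt, v t) = γ` with `jr ∈ 𝒫 r`, `jt ∈ 𝒫 t`, and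
`Ed(P i, v q) ≤ γ` for every `q` and every `i ∈ 𝒫 q`), then for every `k` and every
`y ∈ S k` we have `φ(y) ≥ φ(v k)`: no point in the interior of any hanging subgraph
has strictly smaller objective value than its hinge, i.e. the center can be taken on
the block. -/
theorem stmt_11 {X : Type*} [MetricSpace X] {s : ℕ} (v : Fin s → X) (S : Fin s → Set X)
    (hdisj : ∀ k l, k ≠ l → Disjoint (S k) (S l))
    (hv : ∀ r k, v r ∉ S k)
    (hsep : ∀ k, SeparatedBy (S k) (v k))
    {n m : ℕ} (hn : 0 < n) (w : Fin n → ℝ) (hw : ∀ i, 0 < w i)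
    (P : Fin n → Fin m → X) (f : Fin n → Fin m → ℝ)
    (hf : ∀ i j, 0 ≤ f i j) (hsum : ∀ i, ∑ j, f i j = 1)
    (r t : Fin s) (hrt : r ≠ t) (jr jt : Fin n) (γ : ℝ)
    (hjr : 1 / 2 < probSum (P jr) (f jr) (S r))
    (hjt : 1 / 2 < probSum (P jt) (f jt) (S t))
    (hγr : Ed (w jr) (P jr) (f jr) (v r) = γ)
    (hγt : Ed (w jt) (P jt) (f jt) (v t) = γ)
    (hmax : ∀ q : Fin s, ∀ i : Fin n, 1 / 2 < probSum (P i) (f i) (S q) →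
      Ed (w i) (P i) (f i) (v q) ≤ γ) :
    ∀ k : Fin s, ∀ y ∈ S k, obj hn w P f (v k) ≤ obj hn w P f y := by
  intro k y hy
  unfold obj
  apply Finset.sup'_le
  intro i _
  by_cases hi : 1 / 2 < probSum (P i) (f i) (S k)
  · have h1 : Ed (w i) (P i) (f i) (v k) ≤ γ := hmax k i hi
    rcases eq_or_ne k r with hk | hk
    · -- k = r, so k ≠ t; use jt
      have hkt : k ≠ t := hk ▸ hrt
      have hy' : y ∉ S t := fun h => Set.disjoint_left.mp (hdisj k t hkt) hy h
      have hyv : y ≠ v t := fun h => hv t k (h ▸ hy)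
      have h2 : Ed (w jt) (P jt) (f jt) (v t) ≤ Ed (w jt) (P jt) (f jt) y :=
        lemB (w jt) (hw jt).le (P jt) (f jt) (hf jt) (hsum jt) (S t) (v t) y
          (hsep t) hy' hyv hjt.le
      exact le_trans (h1.trans (hγt ▸ h2)) (Finset.le_sup' (fun i => Ed (w i) (P i) (f i) y) (Finset.mem_univ jt))
    · have hy' : y ∉ S r := fun h => Set.disjoint_left.mp (hdisj k r hk) hy h
      have hyv : y ≠ v r := fun h => hv r k (h ▸ hy)
      have h2 : Ed (w jr) (P jr) (f jr) (v r) ≤ Ed (w jr) (P jr) (f jr) y :=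
        lemB (w jr) (hw jr).le (P jr) (f jr) (hf jr) (hsum jr) (S r) (v r) y
          (hsep r) hy' hyv hjr.le
      exact le_trans (h1.trans (hγr ▸ h2)) (Finset.le_sup' (fun i => Ed (w i) (P i) (f i) y) (Finset.mem_univ jr))
  · have h2 : Ed (w i) (P i) (f i) (v k) ≤ Ed (w i) (P i) (f i) y :=
      lemA (w i) (hw i).le (P i) (f i) (hf i) (hsum i) (S k) (v k) y
        (hsep k) hy (le_of_not_gt hi)
    exact le_trans h2 (Finset.le_sup' (fun i => Ed (w i) (P i) (f i) y) (Finset.mem_univ i))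
end

section
/- Let L > 0, let w ≥ 0, let f_1,…,f_m ≥ 0 with Σ_{j=1}^m f_j = 1, and let x_1,…,x_m ∈ ℝ (arc coordinates of the locations of an uncertain point on a cycle of circumference L). Let s ≤ s' be reals with s' − s ≤ L/2 such that for every j: s' ≤ x_j ≤ s + L, and either x_j ≤ s + L/2 or x_j ≥ s' + L/2 (no location and no antipodal point of a location lies strictly between s and s'). Define Ed(x) = w·Σ_{j=1}^m f_j·min(x_j − x, L − (x_j − x)) (the weighted expected cycle distance from the point at arc coordinate x to the locations), and let F = Σ_{j : x_j ≤ s + L/2} f_j. Then Ed(s') − Ed(s) = w·(1 − 2F)·(s' − s). In particular, on any arc of the cycle containing no location and no antipode of a location, the expected distance function is affine with slope w·(1 − 2F). -/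
/-- On a cycle of circumference `L`, the expected distance of an uncertain point (weight
`w`, locations at arc coordinates `xs j` with probabilities `f j`) to the point at arc
coordinate `x` is `Ed(x) = w · Σ_j f j · min (xs j − x) (L − (xs j − x))`. If `s ≤ s'`
with `s' − s ≤ L/2` and for every `j`: `s' ≤ xs j ≤ s + L` and either `xs j ≤ s + L/2`
or `xs j ≥ s' + L/2` (no location and no antipode of a location lies strictly between
`s` and `s'`), then `Ed(s') − Ed(s) = w·(1 − 2F)·(s' − s)` where
`F = Σ_{j : xs j ≤ s + L/2} f j`: on such an arc, `Ed` is affine with slope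
`w·(1 − 2F)`. -/
theorem stmt_12 (L : ℝ) (hL : 0 < L) (w : ℝ) (hw : 0 ≤ w) {m : ℕ}
    (f : Fin m → ℝ) (hf : ∀ j, 0 ≤ f j) (hsum : ∑ j, f j = 1)
    (xs : Fin m → ℝ) (s s' : ℝ) (hss : s ≤ s') (hlen : s' - s ≤ L / 2)
    (hx : ∀ j, s' ≤ xs j ∧ xs j ≤ s + L ∧ (xs j ≤ s + L / 2 ∨ s' + L / 2 ≤ xs j)) :
    (w * ∑ j, f j * min (xs j - s') (L - (xs j - s'))) -
        (w * ∑ j, f j * min (xs j - s) (L - (xs j - s))) =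
      w * (1 - 2 * ∑ j, if xs j ≤ s + L / 2 then f j else 0) * (s' - s) := by
  have key : ∀ j, f j * min (xs j - s') (L - (xs j - s'))
      - f j * min (xs j - s) (L - (xs j - s))
      = (f j - 2 * (if xs j ≤ s + L / 2 then f j else 0)) * (s' - s) := by
    intro j
    obtain ⟨h1, h2, h3⟩ := hx j
    rcases h3 with h3 | h3
    · rw [if_pos h3, min_eq_left (by linarith), min_eq_left (by linarith)]
      ring
    · rw [min_eq_right (by linarith), min_eq_right (by linarith)]
      split_ifs with h
      · have hs : s' = s := le_antisymm (by linarith) hss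
        rw [hs]; ring
      · ring
  rw [← mul_sub, ← Finset.sum_sub_distrib]
  rw [Finset.sum_congr rfl (fun j _ => key j), ← Finset.sum_mul,
    Finset.sum_sub_distrib, hsum, ← Finset.mul_sum]
  ring
end

section
/- Let L > 0 and 0 < δ ≤ L/2. In the circle AddCircle L (ℝ modulo L·ℤ with its quotient metric), let A be the image of 0 and B be the image of δ, so the image of the interval [0,δ] is a shortest path between the two hinges A and B. For i = 1,…,n (n ≥ 1) let c_i ∈ ℝ, w_i ≥ 0 and f_i ∈ [0,1], and define g_i : AddCircle L → ℝ by g_i(x) = c_i + w_i·(f_i·dist(x,A) + (1 − f_i)·dist(x,B)), and φ(x) = max_{1≤i≤n} g_i(x). Then for every y ∈ AddCircle L there exists t ∈ [0,δ] such that φ(image of t) ≤ φ(y); i.e., the minimum of φ over the circle is attained on the shorter arc between A and B. -/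
lemma addCircle_dist_coe (L : ℝ) (hL : 0 < L) (s t : ℝ) (h : |s - t| ≤ L / 2) :
    dist ((s : ℝ) : AddCircle L) ((t : ℝ) : AddCircle L) = |s - t| := by
  have : ((s : ℝ) : AddCircle L) - ((t : ℝ) : AddCircle L) = ((s - t : ℝ) : AddCircle L) := by
    exact (QuotientAddGroup.mk_sub _ s t).symm
  rw [dist_eq_norm, this, AddCircle.norm_coe_eq_abs_iff L (ne_of_gt hL)]
  rwa [abs_of_pos hL]

/-- Observation on a cycle with two hinges. In the circle `AddCircle L` (ℝ modulo `L·ℤ`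
with its quotient metric), let `A` be the image of `0` and `B` the image of `δ`, where
`0 < δ ≤ L/2`, so the image of `[0, δ]` is a shortest path between the hinges `A` and
`B`. With `g i x = c i + w i · (f i · dist x A + (1 − f i) · dist x B)` and
`φ(x) = max_i g i x`, for every `y` on the circle there is `t ∈ [0, δ]` with
`φ(t) ≤ φ(y)`: the minimum of `φ` is attained on the shorter arc between `A` and `B`. -/
theorem stmt_13 (L : ℝ) (hL : 0 < L) (δ : ℝ) (hδ0 : 0 < δ) (hδ : δ ≤ L / 2)
    {n : ℕ} (hn : 0 < n) (c w f : Fin n → ℝ)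
    (hw : ∀ i, 0 ≤ w i) (hf : ∀ i, 0 ≤ f i ∧ f i ≤ 1) :
    ∀ y : AddCircle L, ∃ t ∈ Set.Icc (0 : ℝ) δ,
      (Finset.univ.sup' (Finset.univ_nonempty_iff.mpr ⟨⟨0, hn⟩⟩) fun i =>
          c i + w i * (f i * dist ((t : ℝ) : AddCircle L) (((0 : ℝ) : AddCircle L))
            + (1 - f i) * dist ((t : ℝ) : AddCircle L) ((δ : AddCircle L)))) ≤
        (Finset.univ.sup' (Finset.univ_nonempty_iff.mpr ⟨⟨0, hn⟩⟩) fun i =>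
          c i + w i * (f i * dist y (((0 : ℝ) : AddCircle L))
            + (1 - f i) * dist y ((δ : AddCircle L)))) := by
  intro y
  set a : ℝ := dist y (((0 : ℝ) : AddCircle L)) with ha
  set b : ℝ := dist y ((δ : AddCircle L)) with hb
  have ha0 : 0 ≤ a := dist_nonneg
  have hb0 : 0 ≤ b := dist_nonneg
  have hAB : dist (((0 : ℝ) : AddCircle L)) ((δ : AddCircle L)) = δ := by
    have := addCircle_dist_coe L hL 0 δ (by rw [abs_of_nonpos (by linarith)]; linarith)
    rwa [abs_of_nonpos (by linarith), neg_sub, sub_zero] at this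
  have htri : δ ≤ a + b := by
    calc δ = dist (((0 : ℝ) : AddCircle L)) ((δ : AddCircle L)) := hAB.symm
    _ ≤ dist (((0 : ℝ) : AddCircle L)) y + dist y ((δ : AddCircle L)) := dist_triangle _ _ _
    _ = a + b := by rw [dist_comm]
  refine ⟨min a δ, ⟨le_min ha0 (le_of_lt hδ0), min_le_right _ _⟩, ?_⟩
  have ht1 : dist (((min a δ : ℝ)) : AddCircle L) (((0 : ℝ) : AddCircle L)) ≤ a := by
    rw [addCircle_dist_coe L hL _ 0 (by
      rw [sub_zero, abs_of_nonneg (le_min ha0 (le_of_lt hδ0))]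
      exact le_trans (min_le_right _ _) hδ)]
    rw [sub_zero, abs_of_nonneg (le_min ha0 (le_of_lt hδ0))]
    exact min_le_left _ _
  have ht2 : dist (((min a δ : ℝ)) : AddCircle L) ((δ : AddCircle L)) ≤ b := by
    rw [addCircle_dist_coe L hL _ δ (by
      rw [abs_of_nonpos (sub_nonpos.mpr (min_le_right _ _))]
      have := le_min ha0 (le_of_lt hδ0); linarith)]
    rw [abs_of_nonpos (sub_nonpos.mpr (min_le_right _ _))]
    rcases le_total a δ with h | h
    · rw [min_eq_left h]; linarith
    · rw [min_eq_right h]; linarith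
  apply Finset.sup'_mono_fun
  intro i _
  have hfi := hf i
  have hwi := hw i
  have h1 : f i * dist (((min a δ : ℝ)) : AddCircle L) (((0 : ℝ) : AddCircle L)) ≤ f i * a :=
    mul_le_mul_of_nonneg_left ht1 hfi.1
  have h2 : (1 - f i) * dist (((min a δ : ℝ)) : AddCircle L) ((δ : AddCircle L)) ≤ (1 - f i) * b :=
    mul_le_mul_of_nonneg_left ht2 (by linarith [hfi.2])
  nlinarith [hwi, h1, h2]
end
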